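/- arXiv:solv-int/9801021 — 4 statements merged into one kernel-verified Lean document; each statement's English description precedes it below -/
import Mathlib

section
/- Let real-valued functions φ_k(x), k ≥ 0, satisfy the super-Toda recursion ∂_x φ_k = e^{φ_{k+1} − φ_k} + e^{φ_k − φ_{k−1}} for k ≥ 1. Then applying ∂_x yields the doubled-spacing Toda lattice equation ∂_x² φ_k = e^{φ_{k+2} − φ_k} − e^{φ_k − φ_{k−2}} for all k ≥ 2. -/
/- If smooth `φ_k` satisfy the super-Toda recursion
`∂_x φ_k = e^{φ_{k+1}−φ_k} + e^{φ_k−φ_{k−1}}` for `k ≥ 1`, then differentiating yields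
the doubled-spacing Toda lattice `∂_x² φ_k = e^{φ_{k+2}−φ_k} − e^{φ_k−φ_{k−2}}` for `k ≥ 2`. -/
theorem stmt_3 (φ : ℕ → ℝ → ℝ) (hsm : ∀ k, ContDiff ℝ (⊤ : ℕ∞) (φ k))
    (hrec : ∀ k, 1 ≤ k → ∀ x : ℝ,
      deriv (φ k) x = Real.exp (φ (k+1) x - φ k x) + Real.exp (φ k x - φ (k-1) x)) :
    ∀ k, 2 ≤ k → ∀ x : ℝ,
      deriv (deriv (φ k)) x
        = Real.exp (φ (k+2) x - φ k x) - Real.exp (φ k x - φ (k-2) x) := by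
  intro k hk x
  have hdφ : ∀ j (y : ℝ), HasDerivAt (φ j) (deriv (φ j) y) y := fun j y =>
    (((hsm j).differentiable (by simp)) y).hasDerivAt
  have hEq : deriv (φ k) = fun y =>
      Real.exp (φ (k+1) y - φ k y) + Real.exp (φ k y - φ (k-1) y) := by
    funext y; exact hrec k (by omega) y
  rw [hEq]
  have h1 : HasDerivAt (fun y => Real.exp (φ (k+1) y - φ k y) + Real.exp (φ k y - φ (k-1) y))
      (Real.exp (φ (k+1) x - φ k x) * (deriv (φ (k+1)) x - deriv (φ k) x)
        + Real.exp (φ k x - φ (k-1) x) * (deriv (φ k) x - deriv (φ (k-1)) x)) x := by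
    exact (((hdφ (k+1) x).sub (hdφ k x)).exp).add (((hdφ k x).sub (hdφ (k-1) x)).exp)
  rw [h1.deriv]
  have e1 := hrec (k+1) (by omega) x
  have e2 := hrec k (by omega) x
  have e3 := hrec (k-1) (by omega) x
  have hk1 : k + 1 - 1 = k := by omega
  have hk2 : k - 1 + 1 = k := by omega
  have hk3 : k - 1 - 1 = k - 2 := by omega
  rw [hk1] at e1
  rw [hk2, hk3] at e3
  rw [e1, e2, e3]
  have p1 : Real.exp (φ (k+1) x - φ k x) * Real.exp (φ (k+1+1) x - φ (k+1) x)
      = Real.exp (φ (k+2) x - φ k x) := by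
    rw [← Real.exp_add]; ring_nf
  have p2 : Real.exp (φ k x - φ (k-1) x) * Real.exp (φ (k-1) x - φ (k-2) x)
      = Real.exp (φ k x - φ (k-2) x) := by
    rw [← Real.exp_add]; ring_nf
  linear_combination p1 - p2
end

section
/- Define Φ_k by Φ_0 a given nowhere-vanishing smooth function, Ψ_0 = 0, Ψ_{k+1} = 1/Φ_k, Φ_{k+1} = Φ_k ∂_x ln Φ_k − Φ_k² Ψ_k. Writing Φ_k = e^{φ_k} (assuming all Φ_k > 0), the functions φ_k satisfy the super-Toda lattice equation ∂_x φ_k = e^{φ_{k+1} − φ_k} + e^{φ_k − φ_{k−1}} for all k ≥ 1. -/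
/- Darboux-Bäcklund chain of SKP_{1/2,1/2}: with `Ψ_0 = 0`, `Ψ_{k+1} = 1/Φ_k`,
`Φ_{k+1} = Φ_k ∂_x ln Φ_k − Φ_k² Ψ_k` and `Φ_k > 0`, the functions `φ_k = ln Φ_k`
satisfy the super-Toda lattice equation
`∂_x φ_k = e^{φ_{k+1}−φ_k} + e^{φ_k−φ_{k−1}}` for all `k ≥ 1`. -/
theorem stmt_5 (Φ Ψ φ : ℕ → ℝ → ℝ)
    (hsm : ∀ k, ContDiff ℝ (⊤ : ℕ∞) (Φ k))
    (hpos : ∀ k x, 0 < Φ k x)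
    (hΨ0 : ∀ x, Ψ 0 x = 0)
    (hΨ : ∀ k x, Ψ (k+1) x = (Φ k x)⁻¹)
    (hΦ : ∀ k x, Φ (k+1) x = Φ k x * (deriv (Φ k) x / Φ k x) - (Φ k x)^2 * Ψ k x)
    (hφ : ∀ k x, φ k x = Real.log (Φ k x)) :
    ∀ k, 1 ≤ k → ∀ x,
      deriv (φ k) x = Real.exp (φ (k+1) x - φ k x) + Real.exp (φ k x - φ (k-1) x) := by
  intro k hk x
  obtain ⟨m, rfl⟩ : ∃ m, k = m + 1 := ⟨k - 1, (Nat.succ_pred_eq_of_pos hk).symm⟩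
  have hne : ∀ j (y : ℝ), Φ j y ≠ 0 := fun j y => (hpos j y).ne'
  -- derivative of φ
  have hdφ : deriv (φ (m+1)) x = deriv (Φ (m+1)) x / Φ (m+1) x := by
    have hfun : φ (m+1) = fun y => Real.log (Φ (m+1) y) := funext (hφ (m+1))
    have hd : HasDerivAt (Φ (m+1)) (deriv (Φ (m+1)) x) x :=
      ((hsm (m+1)).differentiable (by simp) x).hasDerivAt
    have := (Real.hasDerivAt_log (hne (m+1) x)).comp x hd
    rw [hfun]
    simpa [div_eq_inv_mul, Function.comp_def] using this.deriv
  have hexp1 : Real.exp (φ (m+2) x - φ (m+1) x) = Φ (m+2) x / Φ (m+1) x := by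
    rw [hφ, hφ, Real.exp_sub, Real.exp_log (hpos _ _), Real.exp_log (hpos _ _)]
  have hexp2 : Real.exp (φ (m+1) x - φ m x) = Φ (m+1) x / Φ m x := by
    rw [hφ, hφ, Real.exp_sub, Real.exp_log (hpos _ _), Real.exp_log (hpos _ _)]
  have hrec : Φ (m+2) x = deriv (Φ (m+1)) x - (Φ (m+1) x)^2 * (Φ m x)⁻¹ := by
    rw [hΦ, hΨ]
    field_simp
    rw [mul_comm]
    exact mul_div_cancel_right₀ _ (hne (m+1) x)
  show deriv (φ (m+1)) x = _ + Real.exp (φ (m+1) x - φ (m+1-1) x)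
  rw [show (m+1-1) = m from rfl, hdφ, hexp1, hexp2, hrec]
  field_simp [hne]
  ring
end

section
/- Let f_k and Φ_k, Ψ_k evolve under the Darboux recursion f_{k+1} = −2 𝒟_θ ln Φ_k − f_k, Ψ_{k+1} = Φ_k^{−1}, Φ_{k+1} = Φ_k ∂_x ln Φ_k + Φ_k 𝒟_θ f_k + Φ_k² Ψ_k. If the constraint 2 Φ_0 Ψ_0 + 𝒟_θ f_0 = 0 holds initially, then 2 Φ_{k+1} Ψ_{k+1} + 𝒟_θ f_{k+1} = 2 Φ_k Ψ_k + 𝒟_θ f_k for all k, hence the constraint 2 Φ_k Ψ_k + 𝒟_θ f_k = 0 is preserved for all k ≥ 0. -/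
/-! Writing `L = Φ⁻¹ 𝒟_θ Φ` for `𝒟_θ ln Φ`, the key identity is `𝒟_θ L = Φ⁻¹ ∂_x Φ = ∂_x ln Φ`:
the cross term `𝒟_θ(Φ⁻¹) 𝒟_θ Φ` is a multiple of `(𝒟_θ Φ)² = 0`, since `𝒟_θ Φ` is odd.
Then `Φ_{k+1} Ψ_{k+1} = ∂_x ln Φ_k + 𝒟_θ f_k + Φ_k Ψ_k` and
`𝒟_θ f_{k+1} = −2 ∂_x ln Φ_k − 𝒟_θ f_k`, so the `∂_x ln Φ_k` terms cancel in
`2 Φ_{k+1} Ψ_{k+1} + 𝒟_θ f_{k+1}`, leaving `2 Φ_k Ψ_k + 𝒟_θ f_k`. -/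

section Superderivation

variable {R : Type*} [Ring R] {ev od : R → Prop} {Dθ dx : R → R}

theorem mul_mul_eq_self_of_central {u v : R} (hu : ∀ b, u * b = b * u) (huv : u * v = 1)
    (w : R) : u * w * v = w := by
  rw [hu, mul_assoc, huv, mul_one]

theorem superDeriv_one_eq_zero (hLeib_ev : ∀ a b, ev a → Dθ (a * b) = Dθ a * b + a * Dθ b)
    {u v : R} (hu : ev u) (hvu : v * u = 1) : Dθ 1 = 0 := by
  have hu_mul : u * Dθ 1 = 0 := by
    simpa using hLeib_ev u 1 hu
  calc Dθ 1 = v * (u * Dθ 1) := by rw [← mul_assoc, hvu, one_mul]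
    _ = 0 := by rw [hu_mul, mul_zero]

theorem superDeriv_inv_mul_superDeriv
    (hLeib_ev : ∀ a b, ev a → Dθ (a * b) = Dθ a * b + a * Dθ b)
    (hDθsq : ∀ a, Dθ (Dθ a) = dx a) (hev_central : ∀ a b, ev a → a * b = b * a)
    (hod_sq : ∀ a, od a → a * a = 0) (hDθ_ev : ∀ a, ev a → od (Dθ a))
    {u v : R} (hu : ev u) (hv : ev v) (huv : u * v = 1) (hvu : v * u = 1) :
    Dθ (v * Dθ u) = v * dx u := by
  have hDθ_v : Dθ v * u = -(v * Dθ u) := by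
    have h := hLeib_ev v u hv
    rw [hvu, superDeriv_one_eq_zero hLeib_ev hu hvu] at h
    exact eq_neg_of_add_eq_zero_left h.symm
  have hcross : Dθ v * Dθ u = 0 := calc
    Dθ v * Dθ u = Dθ v * u * (v * Dθ u) := by rw [mul_assoc, ← mul_assoc u, huv, one_mul]
    _ = -(v * (Dθ u * v) * Dθ u) := by rw [hDθ_v]; noncomm_ring
    _ = -(v * v * (Dθ u * Dθ u)) := by rw [← hev_central v _ hv]; noncomm_ring
    _ = 0 := by rw [hod_sq _ (hDθ_ev u hu), mul_zero, neg_zero]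
  rw [hLeib_ev v _ hv, hcross, hDθsq, zero_add]

end Superderivation

theorem stmt_7_general {R : Type*} [Ring R]
    (ev od : R → Prop) (Dθ dx : R → R)
    (hDθ_add : ∀ a b, Dθ (a + b) = Dθ a + Dθ b)
    (hDθsq : ∀ a, Dθ (Dθ a) = dx a)
    (hLeib_ev : ∀ a b, ev a → Dθ (a * b) = Dθ a * b + a * Dθ b)
    (hev_central : ∀ a b, ev a → a * b = b * a)
    (hod_sq : ∀ a, od a → a * a = 0)
    (hDθ_ev : ∀ a, ev a → od (Dθ a))
    (f Φ Ψ Φinv : ℕ → R)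
    (hΦ_ev : ∀ k, ev (Φ k))
    (hΦinv_ev : ∀ k, ev (Φinv k))
    (hinv : ∀ k, Φ k * Φinv k = 1) (hinv' : ∀ k, Φinv k * Φ k = 1)
    (hfrec : ∀ k, f (k+1) = -(2 * (Φinv k * Dθ (Φ k))) - f k)
    (hΨrec : ∀ k, Ψ (k+1) = Φinv k)
    (hΦrec : ∀ k, Φ (k+1) = Φ k * (Φinv k * dx (Φ k)) + Φ k * Dθ (f k) + Φ k * Φ k * Ψ k)
    (hconstr0 : 2 * (Φ 0 * Ψ 0) + Dθ (f 0) = 0) :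
    (∀ k, 2 * (Φ (k+1) * Ψ (k+1)) + Dθ (f (k+1)) = 2 * (Φ k * Ψ k) + Dθ (f k)) ∧
    (∀ k, 2 * (Φ k * Ψ k) + Dθ (f k) = 0) := by
  have hstep : ∀ k, 2 * (Φ (k+1) * Ψ (k+1)) + Dθ (f (k+1)) = 2 * (Φ k * Ψ k) + Dθ (f k) := by
    intro k
    have hlog : Dθ (Φinv k * Dθ (Φ k)) = Φinv k * dx (Φ k) :=
      superDeriv_inv_mul_superDeriv hLeib_ev hDθsq hev_central hod_sq hDθ_ev
        (hΦ_ev k) (hΦinv_ev k) (hinv k) (hinv' k)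
    have hΦΨ : Φ (k+1) * Ψ (k+1) = Φinv k * dx (Φ k) + Dθ (f k) + Φ k * Ψ k := by
      have hcancel := mul_mul_eq_self_of_central (hev_central _ · (hΦ_ev k)) (hinv k)
      rw [hΦrec, hΨrec, add_mul, add_mul, mul_assoc (Φ k) (Φ k), hcancel, hcancel, hcancel]
    have hDf : Dθ (f (k+1)) = -(2 * (Φinv k * dx (Φ k))) - Dθ (f k) := by
      have hDθ_neg : ∀ a, Dθ (-a) = -Dθ a := map_neg (AddMonoidHom.mk' Dθ hDθ_add)
      have hDθ_sub : ∀ a b, Dθ (a - b) = Dθ a - Dθ b := map_sub (AddMonoidHom.mk' Dθ hDθ_add)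
      rw [hfrec, hDθ_sub, hDθ_neg, two_mul, hDθ_add, hlog, two_mul]
    rw [hΦΨ, hDf]
    noncomm_ring
  exact ⟨hstep, fun k => Nat.rec hconstr0 (fun k ih => (hstep k).trans ih) k⟩

theorem stmt_7 {R : Type*} [Ring R]
    (ev od : R → Prop) (Dθ dx : R → R)
    (hDθ_add : ∀ a b, Dθ (a + b) = Dθ a + Dθ b)
    (hDθ_neg : ∀ a, Dθ (-a) = -(Dθ a))
    (hdx_add : ∀ a b, dx (a + b) = dx a + dx b)
    (hdx_leib : ∀ a b, dx (a * b) = dx a * b + a * dx b)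
    (hDθsq : ∀ a, Dθ (Dθ a) = dx a)
    (hLeib_ev : ∀ a b, ev a → Dθ (a * b) = Dθ a * b + a * Dθ b)
    (hLeib_od : ∀ a b, od a → Dθ (a * b) = Dθ a * b - a * Dθ b)
    (hev_central : ∀ a b, ev a → a * b = b * a)
    (hod_sq : ∀ a, od a → a * a = 0)
    (hDθ_ev : ∀ a, ev a → od (Dθ a))
    (hDθ_od : ∀ a, od a → ev (Dθ a))
    (hmul_ev : ∀ a b, ev a → ev b → ev (a * b))
    (hmul_od : ∀ a b, od a → od b → ev (a * b))
    (hmul_eo : ∀ a b, ev a → od b → od (a * b))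
    (f Φ Ψ Φinv : ℕ → R)
    (hf_od : ∀ k, od (f k)) (hΦ_ev : ∀ k, ev (Φ k)) (hΨ_ev : ∀ k, ev (Ψ k))
    (hΦinv_ev : ∀ k, ev (Φinv k))
    (hinv : ∀ k, Φ k * Φinv k = 1) (hinv' : ∀ k, Φinv k * Φ k = 1)
    (hfrec : ∀ k, f (k+1) = -(2 * (Φinv k * Dθ (Φ k))) - f k)
    (hΨrec : ∀ k, Ψ (k+1) = Φinv k)
    (hΦrec : ∀ k, Φ (k+1) = Φ k * (Φinv k * dx (Φ k)) + Φ k * Dθ (f k) + Φ k * Φ k * Ψ k)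
    (hconstr0 : 2 * (Φ 0 * Ψ 0) + Dθ (f 0) = 0) :
    (∀ k, 2 * (Φ (k+1) * Ψ (k+1)) + Dθ (f (k+1)) = 2 * (Φ k * Ψ k) + Dθ (f k)) ∧
    (∀ k, 2 * (Φ k * Ψ k) + Dθ (f k) = 0) :=
  stmt_7_general ev od Dθ dx hDθ_add hDθsq hLeib_ev hev_central hod_sq hDθ_ev f Φ Ψ Φinv hΦ_ev
    hΦinv_ev hinv hinv' hfrec hΨrec hΦrec hconstr0
end

section
/- The substitution Φ̃₀ = 𝓣𝓛(Φ₀), Ψ̃₀ = Φ₀^{−1}, f̃₀ = −f₀ − 2𝒟_θ ln Φ₀ preserves the constraint: if 𝒟_θ f₀ + 2Φ₀Ψ₀ = 0 then 𝒟_θ f̃₀ + 2Φ̃₀Ψ̃₀ = 0, where Φ̃₀ = Φ₀ ∂_x ln Φ₀ + Φ₀ 𝒟_θ f₀ + Φ₀² Ψ₀. -/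
/-! The transformed field is `f̃₀ = -f₀ - 2 Φ₀⁻¹ 𝒟_θ Φ₀`, so `𝒟_θ f̃₀ = -𝒟_θ f₀ - 2 Φ₀⁻¹ ∂_x Φ₀`:
the cross term `(𝒟_θ Φ₀⁻¹)(𝒟_θ Φ₀) = -Φ₀⁻² (𝒟_θ Φ₀)²` vanishes because `𝒟_θ Φ₀` is odd.
On the other side, `2 Φ̃₀ Ψ̃₀ = 2 Φ₀⁻¹ ∂_x Φ₀ + 2 𝒟_θ f₀ + 2 Φ₀ Ψ₀` since `Φ₀⁻¹` is central.
The `∂_x ln Φ₀` terms cancel and what is left is the original constraint. -/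

section Leibniz

variable {R : Type*} [Ring R] (D : R → R) {u v : R}

theorem mul_mul_eq_self_of_mul_eq_one_of_central (huv : u * v = 1)
    (hv : ∀ x, v * x = x * v) (x : R) : u * x * v = x := by
  rw [mul_assoc, ← hv, ← mul_assoc, huv, one_mul]

theorem map_one_eq_zero_of_leibniz (huv : u * v = 1)
    (hv : ∀ b, D (v * b) = D v * b + v * D b) : D 1 = 0 := by
  have hv1 : v * D 1 = 0 := by simpa using hv 1
  calc D 1 = u * (v * D 1) := by rw [← mul_assoc, huv, one_mul]
    _ = 0 := by rw [hv1, mul_zero]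

theorem map_inv_eq_of_leibniz (huv : u * v = 1) (hv : ∀ x, v * x = x * v)
    (hu : ∀ b, D (u * b) = D u * b + u * D b) (hD1 : D 1 = 0) :
    D v = -(v * D u * v) := by
  have hprod : u * D v = -(D u * v) := by
    rw [eq_neg_iff_add_eq_zero, add_comm, ← hu, huv, hD1]
  calc D v = v * (u * D v) := by rw [← mul_assoc, hv, huv, one_mul]
    _ = -(v * D u * v) := by rw [hprod, mul_neg, mul_assoc]

theorem map_inv_mul_map_eq_zero_of_leibniz (huv : u * v = 1) (hv : ∀ x, v * x = x * v)
    (hu : ∀ b, D (u * b) = D u * b + u * D b) (hD1 : D 1 = 0) (hsq : D u * D u = 0) :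
    D v * D u = 0 := by
  rw [map_inv_eq_of_leibniz D huv hv hu hD1, mul_assoc v, ← hv, neg_mul, mul_assoc,
    mul_assoc, hsq, mul_zero, mul_zero, neg_zero]

end Leibniz

theorem stmt_18_general {R : Type*} [Ring R]
    (ev od : R → Prop) (Dθ dx : R → R)
    (hDθ_add : ∀ a b, Dθ (a + b) = Dθ a + Dθ b)
    (hDθsq : ∀ a, Dθ (Dθ a) = dx a)
    (hLeib_ev : ∀ a b, ev a → Dθ (a * b) = Dθ a * b + a * Dθ b)
    (hev_central : ∀ a b, ev a → a * b = b * a)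
    (hod_sq : ∀ a, od a → a * a = 0)
    (hDθ_ev : ∀ a, ev a → od (Dθ a))
    (f0 Φ0 Ψ0 Φinv : R)
    (hΦ0_ev : ev Φ0) (hΦinv_ev : ev Φinv)
    (hinv : Φ0 * Φinv = 1)
    (hconstr : Dθ f0 + 2 * (Φ0 * Ψ0) = 0) :
    Dθ (-f0 - 2 * (Φinv * Dθ Φ0))
      + 2 * ((Φ0 * (Φinv * dx Φ0) + Φ0 * Dθ f0 + Φ0 * Φ0 * Ψ0) * Φinv) = 0 := by
  let D : R →+ R := AddMonoidHom.mk' Dθ hDθ_add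
  have hcentral : ∀ x, Φinv * x = x * Φinv := fun x => hev_central Φinv x hΦinv_ev
  have hD1 : Dθ 1 = 0 :=
    map_one_eq_zero_of_leibniz Dθ hinv fun b => hLeib_ev Φinv b hΦinv_ev
  have hcross : Dθ Φinv * Dθ Φ0 = 0 :=
    map_inv_mul_map_eq_zero_of_leibniz Dθ hinv hcentral (fun b => hLeib_ev Φ0 b hΦ0_ev) hD1
      (hod_sq _ (hDθ_ev Φ0 hΦ0_ev))
  have hlhs : Dθ (-f0 - 2 * (Φinv * Dθ Φ0)) = -Dθ f0 - 2 * (Φinv * dx Φ0) := by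
    change D (-f0 - 2 * (Φinv * Dθ Φ0)) = -D f0 - 2 * (Φinv * dx Φ0)
    rw [map_sub, map_neg, two_mul, map_add, ← two_mul]
    change _ - 2 * Dθ (Φinv * Dθ Φ0) = _
    rw [hLeib_ev _ _ hΦinv_ev, hcross, hDθsq, zero_add]
  have hrhs : (Φ0 * (Φinv * dx Φ0) + Φ0 * Dθ f0 + Φ0 * Φ0 * Ψ0) * Φinv
      = Φinv * dx Φ0 + Dθ f0 + Φ0 * Ψ0 := by
    simp only [add_mul, mul_assoc Φ0 Φ0 Ψ0,
      mul_mul_eq_self_of_mul_eq_one_of_central hinv hcentral]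
  rw [hlhs, hrhs, ← hconstr]
  noncomm_ring

theorem stmt_18 {R : Type*} [Ring R]
    (ev od : R → Prop) (Dθ dx : R → R)
    (hDθ_add : ∀ a b, Dθ (a + b) = Dθ a + Dθ b)
    (hDθ_neg : ∀ a, Dθ (-a) = -(Dθ a))
    (hdx_add : ∀ a b, dx (a + b) = dx a + dx b)
    (hdx_leib : ∀ a b, dx (a * b) = dx a * b + a * dx b)
    (hDθsq : ∀ a, Dθ (Dθ a) = dx a)
    (hLeib_ev : ∀ a b, ev a → Dθ (a * b) = Dθ a * b + a * Dθ b)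
    (hLeib_od : ∀ a b, od a → Dθ (a * b) = Dθ a * b - a * Dθ b)
    (hev_central : ∀ a b, ev a → a * b = b * a)
    (hod_sq : ∀ a, od a → a * a = 0)
    (hDθ_ev : ∀ a, ev a → od (Dθ a))
    (hDθ_od : ∀ a, od a → ev (Dθ a))
    (hmul_ev : ∀ a b, ev a → ev b → ev (a * b))
    (hmul_od : ∀ a b, od a → od b → ev (a * b))
    (hmul_eo : ∀ a b, ev a → od b → od (a * b))
    (f0 Φ0 Ψ0 Φinv : R)
    (hf0_od : od f0) (hΦ0_ev : ev Φ0) (hΨ0_ev : ev Ψ0) (hΦinv_ev : ev Φinv)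
    (hinv : Φ0 * Φinv = 1) (hinv' : Φinv * Φ0 = 1)
    (hconstr : Dθ f0 + 2 * (Φ0 * Ψ0) = 0) :
    Dθ (-f0 - 2 * (Φinv * Dθ Φ0))
      + 2 * ((Φ0 * (Φinv * dx Φ0) + Φ0 * Dθ f0 + Φ0 * Φ0 * Ψ0) * Φinv) = 0 :=
  stmt_18_general ev od Dθ dx hDθ_add hDθsq hLeib_ev hev_central hod_sq hDθ_ev f0 Φ0 Ψ0 Φinv hΦ0_ev
    hΦinv_ev hinv hconstr
end
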